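/- arXiv:2009.07952 — 2 statements merged into one kernel-verified Lean document; each statement's English description precedes it below -/
import Mathlib

section
/- For every x₀ ∈ ℝ^N and every T > 0 there exists a unique solution of the N-dimensional shell model on [0,T] with initial condition x₀. -/
/-- Coefficients of the N-dimensional shell model: `k n = λ ^ n` for `1 < n < N`,
and `k 0 = k 1 = k N = k (N+1) = 0`. -/
noncomputable def shellK (lam : ℝ) (N : ℕ) (n : ℕ) : ℝ :=
  if 1 < n ∧ n < N then lam ^ n else 0

/-- A solution of the `N`-dimensional shell model on `[0,T]`, with the convention
`X_0 ≡ 0`, `X_{N+1} ≡ 0`. -/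
def IsShellSolution (lam : ℝ) (N : ℕ) (T : ℝ) (X : ℝ → ℕ → ℝ) : Prop :=
  (∀ t, X t 0 = 0) ∧ (∀ t, X t (N + 1) = 0) ∧
  ∀ n, 1 ≤ n → n ≤ N → ∀ t ∈ Set.Icc (0 : ℝ) T,
    HasDerivWithinAt (fun u => X u n)
      (shellK lam N n * (X t (n - 1)) ^ 2
        - shellK lam N (n + 1) * X t n * X t (n + 1)
        - shellK lam N n * (X t (n + 1)) ^ 2
        + shellK lam N (n - 1) * X t (n - 1) * X t n)
      (Set.Icc (0 : ℝ) T) t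

/-!
The right-hand side `F` of the shell model is a polynomial vector field on `ℝ^N`, hence locally
Lipschitz, which gives uniqueness. It conserves the energy: `⟪v, F v⟫ = 0` for every `v`, because
`v_n F_n(v)` telescopes into the differences of the fluxes
`k_n v_n v_{n-1}² + k_{n-1} v_{n-1} v_n²` between consecutive shells, and the boundary
conditions `v_0 = v_{N+1} = 0` kill both end terms. So solutions stay on the sphere of their
initial energy. Cutting `F` off smoothly outside a larger ball gives a globally Lipschitz,
bounded, still energy-conserving field, for which Picard–Lindelöf yields a solution on all of
`[0,T]`; it never leaves the ball, so it solves the original system.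
-/

open Set Metric Finset
open scoped RealInnerProductSpace

section ODE

variable {E : Type*}

theorem ContDiff.exists_lipschitzWith_eqOn_closedBall [NormedAddCommGroup E] [NormedSpace ℝ E]
    [FiniteDimensional ℝ E] {F : Type*} [NormedAddCommGroup F] [NormedSpace ℝ F] {f : E → F}
    (hf : ContDiff ℝ 1 f) (R : ℝ) :
    ∃ g : E → F, (∃ K, LipschitzWith K g) ∧ (∃ C, ∀ v, ‖g v‖ ≤ C) ∧
      EqOn g f (closedBall 0 R) ∧ ∀ v, ∃ c : ℝ, g v = c • f v := by
  let φ : ContDiffBump (0 : E) := ⟨|R| + 1, |R| + 2, by positivity, by linarith⟩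
  have hsupp : HasCompactSupport (fun v => φ v • f v) := φ.hasCompactSupport.smul_right
  have hg : ContDiff ℝ 1 (fun v => φ v • f v) := φ.contDiff.smul hf
  refine ⟨fun v => φ v • f v, hg.lipschitzWith_of_hasCompactSupport hsupp one_ne_zero,
    hsupp.exists_bound_of_continuous hg.continuous, fun v hv => ?_, fun v => ⟨φ v, rfl⟩⟩
  have hvφ : v ∈ closedBall 0 φ.rIn :=
    closedBall_subset_closedBall (by linarith [le_abs_self R]) hv
  simp only [φ.one_of_mem_closedBall hvφ, one_smul]

theorem ODE_solution_unique_of_contDiff [NormedAddCommGroup E] [NormedSpace ℝ E] [ProperSpace E]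
    {f : E → E} (hf : ContDiff ℝ 1 f) {x y : ℝ → E} {a b : ℝ}
    (hx : ∀ t ∈ Icc a b, HasDerivWithinAt x (f (x t)) (Icc a b) t)
    (hy : ∀ t ∈ Icc a b, HasDerivWithinAt y (f (y t)) (Icc a b) t) (ha : x a = y a) :
    EqOn x y (Icc a b) := by
  have hxc : ContinuousOn x (Icc a b) := fun t ht => (hx t ht).continuousWithinAt
  have hyc : ContinuousOn y (Icc a b) := fun t ht => (hy t ht).continuousWithinAt
  obtain ⟨M, hM⟩ := ((isCompact_Icc.image_of_continuousOn hxc).union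
    (isCompact_Icc.image_of_continuousOn hyc)).isBounded.subset_closedBall 0
  obtain ⟨K, hK⟩ := hf.contDiffOn.exists_lipschitzOnWith one_ne_zero (convex_closedBall 0 M)
    (isCompact_closedBall 0 M)
  refine ODE_solution_unique_of_mem_Icc_right (v := fun _ => f) (s := fun _ => closedBall 0 M)
    (fun _ _ => hK) hxc ?_ ?_ hyc ?_ ?_ ha
  · exact fun t ht => (hx t (Ico_subset_Icc_self ht)).mono_of_mem_nhdsWithin
      (Icc_mem_nhdsGE_of_mem ht)
  · exact fun t ht => hM (Or.inl (mem_image_of_mem x (Ico_subset_Icc_self ht)))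
  · exact fun t ht => (hy t (Ico_subset_Icc_self ht)).mono_of_mem_nhdsWithin
      (Icc_mem_nhdsGE_of_mem ht)
  · exact fun t ht => hM (Or.inr (mem_image_of_mem y (Ico_subset_Icc_self ht)))

variable [NormedAddCommGroup E] [InnerProductSpace ℝ E]

theorem norm_eq_of_forall_hasDerivWithinAt_of_inner_self_eq_zero {f : E → E}
    (hf : ∀ v, ⟪v, f v⟫ = 0) {x : ℝ → E} {a b : ℝ}
    (hx : ∀ t ∈ Icc a b, HasDerivWithinAt x (f (x t)) (Icc a b) t) :
    ∀ t ∈ Icc a b, ‖x t‖ = ‖x a‖ := by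
  have hsq : ∀ t ∈ Icc a b, ‖x t‖ ^ 2 = ‖x a‖ ^ 2 := by
    refine constant_of_has_deriv_right_zero (fun t ht => (hx t ht).continuousWithinAt.norm.pow 2)
      fun t ht => ?_
    simpa only [hf, mul_zero] using ((hx t (Ico_subset_Icc_self ht)).norm_sq).mono_of_mem_nhdsWithin
      (Icc_mem_nhdsGE_of_mem ht)
  exact fun t ht => (pow_left_inj₀ (norm_nonneg _) (norm_nonneg _) two_ne_zero).1 (hsq t ht)

theorem exists_forall_mem_Icc_hasDerivWithinAt_of_inner_self_eq_zero [FiniteDimensional ℝ E]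
    {f : E → E} (hf : ContDiff ℝ 1 f) (hf_orth : ∀ v, ⟪v, f v⟫ = 0) (x₀ : E) {a b : ℝ}
    (hab : a ≤ b) :
    ∃ x : ℝ → E, x a = x₀ ∧ ∀ t ∈ Icc a b, HasDerivWithinAt x (f (x t)) (Icc a b) t := by
  obtain ⟨g, ⟨K, hK⟩, ⟨C, hC⟩, hgf, hg_smul⟩ := hf.exists_lipschitzWith_eqOn_closedBall ‖x₀‖
  have hg_orth : ∀ v, ⟪v, g v⟫ = 0 := fun v => by
    obtain ⟨c, hc⟩ := hg_smul v
    rw [hc, inner_smul_right, hf_orth, mul_zero]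
  have hpl : IsPicardLindelof (fun _ => g) (t₀ := ⟨a, left_mem_Icc.2 hab⟩) x₀
      (C.toNNReal * (b - a).toNNReal) 0 C.toNNReal K :=
    .of_time_independent (fun v _ => (hC v).trans (Real.le_coe_toNNReal C)) hK.lipschitzOnWith
      (by simp [Real.coe_toNNReal _ (sub_nonneg.2 hab), hab])
  obtain ⟨x, hx₀, hx⟩ := hpl.exists_eq_forall_mem_Icc_hasDerivWithinAt₀
  refine ⟨x, hx₀, fun t ht => ?_⟩
  have hxt : ‖x t‖ = ‖x₀‖ := hx₀ ▸ norm_eq_of_forall_hasDerivWithinAt_of_inner_self_eq_zero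
    hg_orth hx t ht
  rw [← hgf (mem_closedBall_zero_iff.2 hxt.le)]
  exact hx t ht

end ODE

def shellRHS (k X : ℕ → ℝ) (n : ℕ) : ℝ :=
  k n * X (n - 1) ^ 2 - k (n + 1) * X n * X (n + 1) - k n * X (n + 1) ^ 2
    + k (n - 1) * X (n - 1) * X n

theorem sum_range_mul_shellRHS_eq_zero (k X : ℕ → ℝ) {N : ℕ} (h₀ : X 0 = 0)
    (hN : X (N + 1) = 0) : ∑ n ∈ range N, X (n + 1) * shellRHS k X (n + 1) = 0 := by
  let flux : ℕ → ℝ := fun n => k n * X n * X (n - 1) ^ 2 + k (n - 1) * X (n - 1) * X n ^ 2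
  have htel : ∀ n, X (n + 1) * shellRHS k X (n + 1) = flux (n + 1) - flux (n + 1 + 1) := by
    intro n
    simp only [flux, shellRHS, Nat.add_sub_cancel]
    ring
  rw [sum_congr rfl fun n _ => htel n, sum_range_sub' (fun n => flux (n + 1))]
  simp [flux, h₀, hN]

theorem Fin.exists_val_add_one_eq {N n : ℕ} (hn₁ : 1 ≤ n) (hnN : n ≤ N) :
    ∃ i : Fin N, (i : ℕ) + 1 = n :=
  ⟨⟨n - 1, by omega⟩, by simp only; omega⟩

/-- The vector `v ∈ ℝ^N` as the sequence `(0, v_1, …, v_N, 0, 0, …)`. -/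
def shellExt (N : ℕ) (v : Fin N → ℝ) : ℕ → ℝ
  | 0 => 0
  | m + 1 => if h : m < N then v ⟨m, h⟩ else 0

@[simp]
theorem shellExt_zero (N : ℕ) (v : Fin N → ℝ) : shellExt N v 0 = 0 := rfl

@[simp]
theorem shellExt_succ (N : ℕ) (v : Fin N → ℝ) (i : Fin N) : shellExt N v (i + 1) = v i := by
  simp [shellExt]

@[simp]
theorem shellExt_succ_self (N : ℕ) (v : Fin N → ℝ) : shellExt N v (N + 1) = 0 := by
  simp [shellExt]

theorem shellExt_apply_of_le {N : ℕ} {X : ℕ → ℝ} (h₀ : X 0 = 0) (hN : X (N + 1) = 0) {m : ℕ}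
    (hm : m ≤ N + 1) : shellExt N (fun i => X (i + 1)) m = X m := by
  rcases m with _ | m
  · exact h₀.symm
  · by_cases h : m < N
    · simp [shellExt, h]
    · obtain rfl : m = N := by omega
      simpa using hN.symm

@[fun_prop]
theorem contDiff_shellExt {n : WithTop ℕ∞} (N m : ℕ) :
    ContDiff ℝ n fun v : Fin N → ℝ => shellExt N v m := by
  rcases m with _ | m
  · exact contDiff_const
  · by_cases h : m < N
    · simpa [shellExt, h] using contDiff_apply ℝ ℝ (⟨m, h⟩ : Fin N)
    · simpa [shellExt, h] using contDiff_const

/-- The shell model as a vector field on `ℝ^N`; coordinate `i` is the shell `i + 1`. -/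
def shellField (k : ℕ → ℝ) (N : ℕ) (v : Fin N → ℝ) : Fin N → ℝ :=
  fun i => shellRHS k (shellExt N v) (i + 1)

theorem contDiff_shellField {n : WithTop ℕ∞} (k : ℕ → ℝ) (N : ℕ) :
    ContDiff ℝ n (shellField k N) :=
  contDiff_pi.2 fun i => by unfold shellField shellRHS; fun_prop

theorem sum_mul_shellField_eq_zero (k : ℕ → ℝ) (N : ℕ) (v : Fin N → ℝ) :
    ∑ i, v i * shellField k N v i = 0 := by
  have h := sum_range_mul_shellRHS_eq_zero k (shellExt N v) (shellExt_zero N v)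
    (shellExt_succ_self N v)
  rw [← Fin.sum_univ_eq_sum_range (fun n => shellExt N v (n + 1) *
    shellRHS k (shellExt N v) (n + 1))] at h
  simp only [shellExt_succ] at h
  exact h

theorem exists_forall_mem_Icc_hasDerivWithinAt_shellField (k : ℕ → ℝ) (N : ℕ)
    (x₀ : Fin N → ℝ) {a b : ℝ} (hab : a ≤ b) :
    ∃ x : ℝ → Fin N → ℝ, x a = x₀ ∧
      ∀ t ∈ Icc a b, HasDerivWithinAt x (shellField k N (x t)) (Icc a b) t := by
  let e := EuclideanSpace.equiv (Fin N) ℝ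
  have hf : ContDiff ℝ 1 (e.symm ∘ shellField k N ∘ e) :=
    e.symm.contDiff.comp ((contDiff_shellField k N).comp e.contDiff)
  have hf_orth : ∀ v, ⟪v, (e.symm ∘ shellField k N ∘ e) v⟫ = 0 := fun v => by
    simpa [PiLp.inner_apply, mul_comm, e] using sum_mul_shellField_eq_zero k N (e v)
  obtain ⟨y, hy₀, hy⟩ :=
    exists_forall_mem_Icc_hasDerivWithinAt_of_inner_self_eq_zero hf hf_orth (e.symm x₀) hab
  refine ⟨e ∘ y, by simp [hy₀], fun t ht => ?_⟩
  simpa using e.hasFDerivAt.comp_hasDerivWithinAt t (hy t ht)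

theorem isShellSolution_shellExt {lam : ℝ} {N : ℕ} {T : ℝ} {x : ℝ → Fin N → ℝ}
    (hx : ∀ t ∈ Icc 0 T, HasDerivWithinAt x (shellField (shellK lam N) N (x t)) (Icc 0 T) t) :
    IsShellSolution lam N T fun t => shellExt N (x t) := by
  refine ⟨fun t => rfl, fun t => shellExt_succ_self N (x t), fun n hn₁ hnN t ht => ?_⟩
  obtain ⟨i, rfl⟩ := Fin.exists_val_add_one_eq hn₁ hnN
  rw [show (fun u => shellExt N (x u) (i + 1)) = fun u => x u i from
    funext fun u => shellExt_succ N (x u) i]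
  exact hasDerivWithinAt_pi.1 (hx t ht) i

theorem IsShellSolution.hasDerivWithinAt_shellField {lam : ℝ} {N : ℕ} {T : ℝ} {X : ℝ → ℕ → ℝ}
    (hX : IsShellSolution lam N T X) :
    ∀ t ∈ Icc 0 T, HasDerivWithinAt (fun u (i : Fin N) => X u (i + 1))
      (shellField (shellK lam N) N fun i => X t (i + 1)) (Icc 0 T) t := by
  intro t ht
  refine hasDerivWithinAt_pi.2 fun i => ?_
  have hext : ∀ m ≤ N + 1, shellExt N (fun i : Fin N => X t (i + 1)) m = X t m :=
    fun m => shellExt_apply_of_le (hX.1 t) (hX.2.1 t)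
  simp only [shellField, shellRHS, Nat.add_sub_cancel, hext i (by omega),
    hext (i + 1) (by omega), hext (i + 1 + 1) (by omega)]
  simpa using hX.2.2 (i + 1) (by omega) (by omega) t ht

theorem shell_existence_uniqueness_general (lam : ℝ) (N : ℕ)
    (T : ℝ) (hT : 0 < T) (x₀ : ℕ → ℝ) :
    (∃ X : ℝ → ℕ → ℝ, IsShellSolution lam N T X ∧ ∀ n, 1 ≤ n → n ≤ N → X 0 n = x₀ n) ∧
    (∀ X Y : ℝ → ℕ → ℝ, IsShellSolution lam N T X → IsShellSolution lam N T Y →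
      (∀ n, 1 ≤ n → n ≤ N → X 0 n = x₀ n) → (∀ n, 1 ≤ n → n ≤ N → Y 0 n = x₀ n) →
      ∀ n, 1 ≤ n → n ≤ N → ∀ t ∈ Set.Icc (0 : ℝ) T, X t n = Y t n) := by
  refine ⟨?_, fun X Y hX hY hX₀ hY₀ n hn₁ hnN t ht => ?_⟩
  · obtain ⟨x, hx₀, hx⟩ :=
      exists_forall_mem_Icc_hasDerivWithinAt_shellField (shellK lam N) N (fun i => x₀ (i + 1)) hT.le
    refine ⟨_, isShellSolution_shellExt hx, fun n hn₁ hnN => ?_⟩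
    obtain ⟨i, rfl⟩ := Fin.exists_val_add_one_eq hn₁ hnN
    simp [hx₀]
  · have hXY := ODE_solution_unique_of_contDiff (contDiff_shellField _ N)
      hX.hasDerivWithinAt_shellField hY.hasDerivWithinAt_shellField
      (funext fun i => (hX₀ (i + 1) (by omega) i.isLt).trans (hY₀ (i + 1) (by omega) i.isLt).symm)
    obtain ⟨i, rfl⟩ := Fin.exists_val_add_one_eq hn₁ hnN
    exact congrFun (hXY ht) i

/-- for every initial condition `x₀ ∈ ℝ^N` and every `T > 0` there exists a
unique solution of the `N`-dimensional shell model on `[0,T]` with initial condition `x₀`. -/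
theorem shell_existence_uniqueness (lam : ℝ) (hlam : 1 < lam) (N : ℕ) (hN : 1 ≤ N)
    (T : ℝ) (hT : 0 < T) (x₀ : ℕ → ℝ) :
    (∃ X : ℝ → ℕ → ℝ, IsShellSolution lam N T X ∧ ∀ n, 1 ≤ n → n ≤ N → X 0 n = x₀ n) ∧
    (∀ X Y : ℝ → ℕ → ℝ, IsShellSolution lam N T X → IsShellSolution lam N T Y →
      (∀ n, 1 ≤ n → n ≤ N → X 0 n = x₀ n) → (∀ n, 1 ≤ n → n ≤ N → Y 0 n = x₀ n) →
      ∀ n, 1 ≤ n → n ≤ N → ∀ t ∈ Set.Icc (0 : ℝ) T, X t n = Y t n) :=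
  shell_existence_uniqueness_general lam N T hT x₀
end

section
/- Let b : ℝ^N → ℝ^N be the shell vector field. Then for every x ∈ ℝ^N: (i) ∑_{n=1}^N x_n b_n(x) = 0; (ii) ∑_{n=1}^N (∂b_n/∂x_n)(x) = 0; consequently, for every r > 0, with f(x) = exp(−‖x‖²/r²) one has div(b f)(x) = ∑_{n=1}^N ∂/∂x_n ( b_n(x) f(x) ) = 0. -/
/-- The shell vector field `b : ℝ^N → ℝ^N`,
`b_n(x) = k_n x_{n−1}² − k_{n+1} x_n x_{n+1} − k_n x_{n+1}² + k_{n−1} x_{n−1} x_n`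
for `1 ≤ n ≤ N`.  (The convention `x_0 = x_{N+1} = 0` is automatic here, since every
occurrence of `x 0` carries the coefficient `k_0 = k_1 = 0` and every occurrence of
`x (N+1)` carries the coefficient `k_N = k_{N+1} = 0`.) -/
noncomputable def shellB (lam : ℝ) (N : ℕ) (n : ℕ) (x : ℕ → ℝ) : ℝ :=
  shellK lam N n * (x (n - 1)) ^ 2
    - shellK lam N (n + 1) * x n * x (n + 1)
    - shellK lam N n * (x (n + 1)) ^ 2
    + shellK lam N (n - 1) * x (n - 1) * x n

/-- The Gaussian density `f(x) = exp(−‖x‖²/r²)`, `‖x‖² = ∑_{n=1}^N x_n²`. -/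
noncomputable def gaussF (r : ℝ) (N : ℕ) (x : ℕ → ℝ) : ℝ :=
  Real.exp (-(∑ n ∈ Finset.Icc 1 N, (x n) ^ 2) / r ^ 2)

open Finset Function

@[simp]
lemma shellK_zero (lam : ℝ) (N : ℕ) : shellK lam N 0 = 0 := by simp [shellK]

@[simp]
lemma shellK_one (lam : ℝ) (N : ℕ) : shellK lam N 1 = 0 := by simp [shellK]

@[simp]
lemma shellK_self (lam : ℝ) (N : ℕ) : shellK lam N N = 0 := by simp [shellK]

@[simp]
lemma shellK_succ_self (lam : ℝ) (N : ℕ) : shellK lam N (N + 1) = 0 := by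
  simp [shellK]

lemma Finset.sum_Icc_sub_succ {M : Type*} [AddCommGroup M] (f : ℕ → M) {m N : ℕ}
    (hm : m ≤ N + 1) : ∑ n ∈ Icc m N, (f n - f (n + 1)) = f m - f (N + 1) := by
  rw [← Ico_add_one_right_eq_Icc, ← neg_sub, ← sum_Ico_sub f hm,
    ← sum_neg_distrib]
  simp_rw [neg_sub]

noncomputable def shellFlux (lam : ℝ) (N : ℕ) (x : ℕ → ℝ) (n : ℕ) : ℝ :=
  shellK lam N n * x (n - 1) ^ 2 * x n + shellK lam N (n - 1) * x (n - 1) * x n ^ 2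

lemma mul_shellB_eq_shellFlux_sub (lam : ℝ) (N : ℕ) (x : ℕ → ℝ) (n : ℕ) :
    x n * shellB lam N n x = shellFlux lam N x n - shellFlux lam N x (n + 1) := by
  simp only [shellB, shellFlux, Nat.add_sub_cancel]
  ring

lemma sum_mul_shellB_eq_zero (lam : ℝ) (N : ℕ) (x : ℕ → ℝ) :
    ∑ n ∈ Icc 1 N, x n * shellB lam N n x = 0 := by
  rw [sum_congr rfl fun n _ => mul_shellB_eq_shellFlux_sub lam N x n,
    sum_Icc_sub_succ _ (Nat.le_add_left 1 N)]
  simp [shellFlux]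

lemma sum_shellK_pred_sub_shellK_succ (lam : ℝ) (N : ℕ) (x : ℕ → ℝ) :
    ∑ n ∈ Icc 1 N,
      (shellK lam N (n - 1) * x (n - 1) - shellK lam N (n + 1) * x (n + 1)) = 0 := by
  set P := fun n => shellK lam N (n - 1) * x (n - 1) + shellK lam N n * x n
  have htelescope : ∀ n,
      shellK lam N (n - 1) * x (n - 1) - shellK lam N (n + 1) * x (n + 1) = P n - P (n + 1) :=
    fun n => by simp only [P, Nat.add_sub_cancel]; ring
  rw [sum_congr rfl fun n _ => htelescope n, sum_Icc_sub_succ _ (Nat.le_add_left 1 N)]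
  simp [P]

lemma hasDerivAt_shellB_update (lam : ℝ) (N : ℕ) (x : ℕ → ℝ) {n : ℕ} (hn : n ≠ 0) :
    HasDerivAt (fun y => shellB lam N n (update x n y))
      (shellK lam N (n - 1) * x (n - 1) - shellK lam N (n + 1) * x (n + 1)) (x n) := by
  have haffine : (fun y => shellB lam N n (update x n y)) = fun y =>
      (shellK lam N n * x (n - 1) ^ 2 - shellK lam N n * x (n + 1) ^ 2) +
        y * (shellK lam N (n - 1) * x (n - 1) - shellK lam N (n + 1) * x (n + 1)) := by
    funext y
    simp only [shellB, update_self, update_of_ne (by omega : n - 1 ≠ n),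
      update_of_ne (by omega : n + 1 ≠ n)]
    ring
  rw [haffine]
  exact (hasDerivAt_mul_const _).const_add _

lemma hasDerivAt_gaussF_update (r : ℝ) (N : ℕ) (x : ℕ → ℝ) {n : ℕ} (hn : n ∈ Icc 1 N) :
    HasDerivAt (fun y => gaussF r N (update x n y)) (gaussF r N x * (-(2 * x n) / r ^ 2))
      (x n) := by
  set S := ∑ m ∈ Icc 1 N \ {n}, x m ^ 2
  have hsq : ∀ y, ∑ m ∈ Icc 1 N, update x n y m ^ 2 = y ^ 2 + S := fun y => by
    rw [← sum_update_of_mem hn]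
    exact sum_congr rfl fun m _ => by
      by_cases hm : m = n
      · subst hm; simp
      · simp [update_of_ne hm]
  have hgauss : (fun y => gaussF r N (update x n y)) = fun y => Real.exp (-(y ^ 2 + S) / r ^ 2) :=
    funext fun y => by rw [gaussF, hsq]
  have hx : gaussF r N x = Real.exp (-(x n ^ 2 + S) / r ^ 2) := by
    rw [← hsq, update_eq_self, gaussF]
  rw [hgauss, hx]
  simpa using (((hasDerivAt_pow 2 (x n)).add_const S).neg.div_const (r ^ 2)).exp

theorem shell_divergence_free_general (lam : ℝ) (N : ℕ) (x : ℕ → ℝ) :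
    (∑ n ∈ Finset.Icc 1 N, x n * shellB lam N n x = 0) ∧
    (∑ n ∈ Finset.Icc 1 N,
      deriv (fun y : ℝ => shellB lam N n (Function.update x n y)) (x n) = 0) ∧
    (∀ r : ℝ, 0 < r →
      ∑ n ∈ Finset.Icc 1 N,
        deriv (fun y : ℝ =>
          shellB lam N n (Function.update x n y) * gaussF r N (Function.update x n y))
          (x n) = 0) := by
  have hderivB : ∀ n ∈ Icc 1 N, HasDerivAt (fun y => shellB lam N n (update x n y))
      (shellK lam N (n - 1) * x (n - 1) - shellK lam N (n + 1) * x (n + 1)) (x n) :=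
    fun n hn => hasDerivAt_shellB_update lam N x (by grind)
  refine ⟨sum_mul_shellB_eq_zero lam N x, ?_, fun r _ => ?_⟩
  · rw [sum_congr rfl fun n hn => (hderivB n hn).deriv]
    exact sum_shellK_pred_sub_shellK_succ lam N x
  · calc _ = ∑ n ∈ Icc 1 N,
          ((shellK lam N (n - 1) * x (n - 1) - shellK lam N (n + 1) * x (n + 1)) * gaussF r N x
            + shellB lam N n x * (gaussF r N x * (-(2 * x n) / r ^ 2))) :=
          sum_congr rfl fun n hn =>
            ((hderivB n hn).mul (hasDerivAt_gaussF_update r N x hn)).deriv.trans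
              (by rw [update_eq_self])
      _ = gaussF r N x * (∑ n ∈ Icc 1 N,
            (shellK lam N (n - 1) * x (n - 1) - shellK lam N (n + 1) * x (n + 1))
          - 2 / r ^ 2 * ∑ n ∈ Icc 1 N, x n * shellB lam N n x) := by
          rw [mul_sub, mul_sum, mul_sum, mul_sum, ← sum_sub_distrib]
          exact sum_congr rfl fun n _ => by ring
      _ = 0 := by rw [sum_shellK_pred_sub_shellK_succ, sum_mul_shellB_eq_zero]; ring

/-- for the shell vector field `b` one has, for every `x ∈ ℝ^N`:
(i) `∑_{n=1}^N x_n b_n(x) = 0`; (ii) `∑_{n=1}^N ∂b_n/∂x_n (x) = 0`; and consequently,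
for every `r > 0`, with `f(x) = exp(−‖x‖²/r²)`, `div (b f)(x) = 0`. -/
theorem shell_divergence_free (lam : ℝ) (hlam : 1 < lam) (N : ℕ) (hN : 1 ≤ N)
    (x : ℕ → ℝ) :
    (∑ n ∈ Finset.Icc 1 N, x n * shellB lam N n x = 0) ∧
    (∑ n ∈ Finset.Icc 1 N,
      deriv (fun y : ℝ => shellB lam N n (Function.update x n y)) (x n) = 0) ∧
    (∀ r : ℝ, 0 < r →
      ∑ n ∈ Finset.Icc 1 N,
        deriv (fun y : ℝ =>
          shellB lam N n (Function.update x n y) * gaussF r N (Function.update x n y))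
          (x n) = 0) :=
  shell_divergence_free_general lam N x
end
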